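/- arXiv:math/0702303 — 3 statements merged into one kernel-verified Lean document; each statement's English description precedes it below -/
import Mathlib

section
/- Let n be a positive integer and λ₁,…,λₙ nonnegative reals with λⱼ ≤ 1 for all j. Then for any real numbers c_{ij} (1 ≤ i,j ≤ n), the quantity Σ_{i,j} c_{ij}²/(1+λᵢ²) − (1/2)Σ_{i,j} (λⱼ c_{ij} + λᵢ c_{ji})²/((1+λᵢ²)(1+λⱼ²)) is nonnegative; in fact it equals at least Σ_{i,j} c_{ij}²(1−λⱼ²)/((1+λᵢ²)(1+λⱼ²)). -/
/-! Writing `D i j = (1 + λᵢ²)(1 + λⱼ²)`, the polarization `½(a + b)² = a² + b² - ½(a - b)²` with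
`a = λⱼ cᵢⱼ`, `b = λᵢ cⱼᵢ`, together with the symmetry of `D` under `i ↔ j` (which makes the
`b²` terms sum to the same as the `a²` terms), gives the identity
`Σ cᵢⱼ²/(1 + λᵢ²) - ½ Σ (a + b)²/D = Σ cᵢⱼ²(1 - λⱼ²)/D + ½ Σ (a - b)²/D`.
The last sum is nonnegative, and so is the first one when `0 ≤ λⱼ ≤ 1`. -/

open Finset

section

variable {ι : Type*} [Fintype ι]

theorem sum_sum_div_comm_of_symm (f D : ι → ι → ℝ) (hD : ∀ i j, D i j = D j i) :
    ∑ i, ∑ j, f j i / D i j = ∑ i, ∑ j, f i j / D i j := by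
  rw [Finset.sum_comm]
  exact Finset.sum_congr rfl fun i _ => Finset.sum_congr rfl fun j _ => by rw [hD]

theorem sum_sq_div_sub_half_sum_sq_eq (lam : ι → ℝ) (c : ι → ι → ℝ) :
    (∑ i, ∑ j, c i j ^ 2 / (1 + lam i ^ 2)) -
        (1 / 2) * ∑ i, ∑ j, (lam j * c i j + lam i * c j i) ^ 2 /
          ((1 + lam i ^ 2) * (1 + lam j ^ 2)) =
      (∑ i, ∑ j, c i j ^ 2 * (1 - lam j ^ 2) / ((1 + lam i ^ 2) * (1 + lam j ^ 2))) +
        (1 / 2) * ∑ i, ∑ j, (lam j * c i j - lam i * c j i) ^ 2 /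
          ((1 + lam i ^ 2) * (1 + lam j ^ 2)) := by
  have h_swap : ∑ i, ∑ j, (lam i * c j i) ^ 2 / ((1 + lam i ^ 2) * (1 + lam j ^ 2)) =
      ∑ i, ∑ j, (lam j * c i j) ^ 2 / ((1 + lam i ^ 2) * (1 + lam j ^ 2)) :=
    sum_sum_div_comm_of_symm (fun i j => (lam j * c i j) ^ 2)
      (fun i j => (1 + lam i ^ 2) * (1 + lam j ^ 2)) fun i j => mul_comm _ _
  have h_pointwise : ∀ i j,
      c i j ^ 2 / (1 + lam i ^ 2) -
          (1 / 2) * ((lam j * c i j + lam i * c j i) ^ 2 / ((1 + lam i ^ 2) * (1 + lam j ^ 2))) =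
        c i j ^ 2 * (1 - lam j ^ 2) / ((1 + lam i ^ 2) * (1 + lam j ^ 2)) +
          (1 / 2) * ((lam j * c i j - lam i * c j i) ^ 2 / ((1 + lam i ^ 2) * (1 + lam j ^ 2))) +
          ((lam j * c i j) ^ 2 / ((1 + lam i ^ 2) * (1 + lam j ^ 2)) -
            (lam i * c j i) ^ 2 / ((1 + lam i ^ 2) * (1 + lam j ^ 2))) := by
    intro i j
    field_simp
    ring
  simp only [Finset.mul_sum, ← Finset.sum_sub_distrib]
  simp only [h_pointwise, Finset.sum_add_distrib, Finset.sum_sub_distrib, h_swap, sub_self,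
    add_zero]

end

theorem stability_key_inequality_general (n : ℕ)
    (lam : Fin n → ℝ) (hlam0 : ∀ j, 0 ≤ lam j) (hlam1 : ∀ j, lam j ≤ 1)
    (c : Fin n → Fin n → ℝ) :
    (∑ i, ∑ j, c i j ^ 2 * (1 - lam j ^ 2) /
        ((1 + lam i ^ 2) * (1 + lam j ^ 2))) ≤
      (∑ i, ∑ j, c i j ^ 2 / (1 + lam i ^ 2)) -
        (1 / 2) * ∑ i, ∑ j, (lam j * c i j + lam i * c j i) ^ 2 /
          ((1 + lam i ^ 2) * (1 + lam j ^ 2)) ∧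
    0 ≤ (∑ i, ∑ j, c i j ^ 2 / (1 + lam i ^ 2)) -
        (1 / 2) * ∑ i, ∑ j, (lam j * c i j + lam i * c j i) ^ 2 /
          ((1 + lam i ^ 2) * (1 + lam j ^ 2)) := by
  rw [sum_sq_div_sub_half_sum_sq_eq]
  have h_diff : 0 ≤ ∑ i, ∑ j, (lam j * c i j - lam i * c j i) ^ 2 /
      ((1 + lam i ^ 2) * (1 + lam j ^ 2)) :=
    sum_nonneg fun i _ => sum_nonneg fun j _ => by positivity
  have h_bound : 0 ≤ ∑ i, ∑ j, c i j ^ 2 * (1 - lam j ^ 2) /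
      ((1 + lam i ^ 2) * (1 + lam j ^ 2)) := by
    refine sum_nonneg fun i _ => sum_nonneg fun j _ => ?_
    have : 0 ≤ 1 - lam j ^ 2 := sub_nonneg.2 (pow_le_one₀ (hlam0 j) (hlam1 j))
    positivity
  constructor <;> linarith

theorem stability_key_inequality (n : ℕ) (hn : 0 < n)
    (lam : Fin n → ℝ) (hlam0 : ∀ j, 0 ≤ lam j) (hlam1 : ∀ j, lam j ≤ 1)
    (c : Fin n → Fin n → ℝ) :
    (∑ i, ∑ j, c i j ^ 2 * (1 - lam j ^ 2) /
        ((1 + lam i ^ 2) * (1 + lam j ^ 2))) ≤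
      (∑ i, ∑ j, c i j ^ 2 / (1 + lam i ^ 2)) -
        (1 / 2) * ∑ i, ∑ j, (lam j * c i j + lam i * c j i) ^ 2 /
          ((1 + lam i ^ 2) * (1 + lam j ^ 2)) ∧
    0 ≤ (∑ i, ∑ j, c i j ^ 2 / (1 + lam i ^ 2)) -
        (1 / 2) * ∑ i, ∑ j, (lam j * c i j + lam i * c j i) ^ 2 /
          ((1 + lam i ^ 2) * (1 + lam j ^ 2)) :=
  stability_key_inequality_general n lam hlam0 hlam1 c
end

section
/- Let p > 1 be an integer, let S ⊆ {1,…,n} be a set of indices of cardinality at most p, and let λᵢ > 0 for i ∈ S with λᵢλⱼ ≤ 1/(p−1) for all i ≠ j in S. Then for any reals dᵢ (i ∈ S): Σ_{i∈S} dᵢ²/(1+λᵢ²)² + Σ_{i≠j∈S} λᵢλⱼ dᵢ dⱼ/((1+λᵢ²)(1+λⱼ²)) ≥ (1/(p−1)) Σ_{i<j∈S} ( |dᵢ|/(1+λᵢ²) − |dⱼ|/(1+λⱼ²) )². -/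
/-!
Put `eᵢ = dᵢ / (1 + λᵢ²)`, `A = ∑ |eᵢ|²` and `B = ∑ |eᵢ|`. Since `0 < λᵢλⱼ ≤ 1/(p-1)`, the cross
term is at least `-(1/(p-1)) ∑_{i ≠ j} |eᵢ||eⱼ| = -(B² - A)/(p-1)`, while Lagrange's identity
turns the left-hand side into `(#S · A - B²)/(p-1)`. The claim thus reduces to
`(#S - 1)/(p - 1) · A ≤ A`.
-/

open Finset

namespace Finset

theorem sum_offDiag_eq_sum_filter_lt_add {ι M : Type*} [LinearOrder ι] [AddCommMonoid M]
    (S : Finset ι) {g : ι × ι → M} (hg : ∀ q, g q.swap = g q) :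
    ∑ q ∈ S.offDiag, g q =
      ∑ q ∈ S ×ˢ S with q.1 < q.2, g q + ∑ q ∈ S ×ˢ S with q.1 < q.2, g q := by
  have hsplit : S.offDiag = {q ∈ S ×ˢ S | q.1 < q.2} ∪ {q ∈ S ×ˢ S | q.2 < q.1} := by
    ext q; simp only [mem_offDiag, mem_union, mem_filter, mem_product]; grind
  have hdisj : Disjoint {q ∈ S ×ˢ S | q.1 < q.2} {q ∈ S ×ˢ S | q.2 < q.1} := by
    grind [disjoint_left]
  have hswap : ∑ q ∈ S ×ˢ S with q.2 < q.1, g q = ∑ q ∈ S ×ˢ S with q.1 < q.2, g q :=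
    sum_nbij' Prod.swap Prod.swap (by simp +contextual) (by simp +contextual) (by simp)
      (by simp) fun q _ => (hg q).symm
  rw [hsplit, sum_union hdisj, hswap]

theorem sum_offDiag_mul {ι R : Type*} [DecidableEq ι] [CommRing R] (S : Finset ι) (f g : ι → R) :
    ∑ q ∈ S.offDiag, f q.1 * g q.2 = (∑ i ∈ S, f i) * (∑ i ∈ S, g i) - ∑ i ∈ S, f i * g i := by
  rw [sum_mul_sum, ← sum_product', ← diag_union_offDiag, sum_union (disjoint_diag_offDiag S),
    sum_diag]
  ring

theorem sum_product_sub_sq {ι R : Type*} [CommRing R] (S : Finset ι) (f : ι → R) :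
    ∑ q ∈ S ×ˢ S, (f q.1 - f q.2) ^ 2 = 2 * (#S * ∑ i ∈ S, f i ^ 2 - (∑ i ∈ S, f i) ^ 2) := by
  simp only [sub_sq, sum_product, sum_add_distrib, sum_sub_distrib, sum_const, nsmul_eq_mul,
    ← mul_sum, ← sum_mul]
  ring

theorem sum_filter_lt_sub_sq {ι R : Type*} [LinearOrder ι] [CommRing R] [IsDomain R] [CharZero R]
    (S : Finset ι) (f : ι → R) :
    ∑ q ∈ S ×ˢ S with q.1 < q.2, (f q.1 - f q.2) ^ 2 =
      #S * ∑ i ∈ S, f i ^ 2 - (∑ i ∈ S, f i) ^ 2 := by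
  have hoff : ∑ q ∈ S.offDiag, (f q.1 - f q.2) ^ 2 = ∑ q ∈ S ×ˢ S, (f q.1 - f q.2) ^ 2 :=
    sum_subset (fun q => by simp +contextual [mem_offDiag]) fun q hq hq' => by
      have hdiag : q.1 = q.2 := by simp_all
      simp [hdiag]
  have htwice := sum_offDiag_eq_sum_filter_lt_add S (g := fun q => (f q.1 - f q.2) ^ 2)
    fun q => by simp only [Prod.fst_swap, Prod.snd_swap]; ring
  rw [hoff, sum_product_sub_sq, ← two_mul] at htwice
  exact (mul_left_cancel₀ two_ne_zero htwice).symm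

end Finset

theorem neg_mul_abs_mul_abs_le_mul {k c u v : ℝ} (hk : 0 ≤ k) (hkc : k ≤ c) :
    -(c * (|u| * |v|)) ≤ k * (u * v) := by
  have : |k * (u * v)| ≤ c * (|u| * |v|) := by
    rw [abs_mul, abs_mul, abs_of_nonneg hk]
    exact mul_le_mul_of_nonneg_right hkc (by positivity)
  linarith [neg_abs_le (k * (u * v))]

theorem mul_sum_filter_lt_abs_sub_sq_le {ι : Type*} [LinearOrder ι] (S : Finset ι) {c : ℝ}
    (hcard : c * (#S - 1) ≤ 1) {lam : ι → ℝ} (hlam : ∀ i ∈ S, 0 ≤ lam i)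
    (hprod : ∀ i ∈ S, ∀ j ∈ S, i ≠ j → lam i * lam j ≤ c) (e : ι → ℝ) :
    c * ∑ q ∈ S ×ˢ S with q.1 < q.2, (|e q.1| - |e q.2|) ^ 2 ≤
      ∑ i ∈ S, e i ^ 2 + ∑ q ∈ S.offDiag, lam q.1 * lam q.2 * (e q.1 * e q.2) := by
  have hcross : -(c * ∑ q ∈ S.offDiag, |e q.1| * |e q.2|) ≤
      ∑ q ∈ S.offDiag, lam q.1 * lam q.2 * (e q.1 * e q.2) := by
    rw [mul_sum, ← sum_neg_distrib]
    refine sum_le_sum fun q hq => ?_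
    obtain ⟨h1, h2, hne⟩ := mem_offDiag.mp hq
    exact neg_mul_abs_mul_abs_le_mul (mul_nonneg (hlam _ h1) (hlam _ h2)) (hprod _ h1 _ h2 hne)
  have hsq : ∑ i ∈ S, e i ^ 2 = ∑ i ∈ S, |e i| ^ 2 := by simp only [sq_abs]
  have hA : c * (#S - 1) * ∑ i ∈ S, |e i| ^ 2 ≤ ∑ i ∈ S, |e i| ^ 2 :=
    mul_le_of_le_one_left (by positivity) hcard
  rw [sum_offDiag_mul S (|e ·|) (|e ·|)] at hcross
  simp only [← sq] at hcross
  rw [sum_filter_lt_sub_sq S (|e ·|), hsq]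
  linarith

theorem two_jacobian_diagonal_estimate (n p : ℕ) (hp : 1 < p)
    (S : Finset (Fin n)) (hS : S.card ≤ p)
    (lam : Fin n → ℝ) (hlam : ∀ i ∈ S, 0 < lam i)
    (hprod : ∀ i ∈ S, ∀ j ∈ S, i ≠ j → lam i * lam j ≤ 1 / (p - 1 : ℝ))
    (d : Fin n → ℝ) :
    (1 / (p - 1 : ℝ)) *
        ∑ q ∈ (S ×ˢ S).filter (fun q => q.1 < q.2),
          (|d q.1| / (1 + lam q.1 ^ 2) - |d q.2| / (1 + lam q.2 ^ 2)) ^ 2 ≤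
      (∑ i ∈ S, d i ^ 2 / (1 + lam i ^ 2) ^ 2) +
        ∑ q ∈ S.offDiag, lam q.1 * lam q.2 * d q.1 * d q.2 /
          ((1 + lam q.1 ^ 2) * (1 + lam q.2 ^ 2)) := by
  have hcard : 1 / (p - 1 : ℝ) * (#S - 1) ≤ 1 := by
    have hp' : (1 : ℝ) < p := by exact_mod_cast hp
    have hS' : (#S : ℝ) ≤ p := by exact_mod_cast hS
    rw [one_div_mul_eq_div, div_le_one (by linarith)]
    linarith
  have hden (i : Fin n) : 0 < 1 + lam i ^ 2 := by positivity
  have key := mul_sum_filter_lt_abs_sub_sq_le S hcard (fun i hi => (hlam i hi).le) hprod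
    (fun i => d i / (1 + lam i ^ 2))
  simp only [abs_div, abs_of_pos (hden _), div_pow] at key
  convert key using 3 with q
  field_simp
end

section
/- Let p > 1 and suppose λ₁,…,λₙ ≥ 0 with at most p of them nonzero and λᵢλⱼ ≤ 1/(p−1) for all i ≠ j. Then for any real numbers c_{ij}: Σ_{i,j} c_{ij}²/(1+λᵢ²) + (Σ_i λᵢ c_{ii}/(1+λᵢ²))² − (1/2)Σ_{i,j} (λⱼ c_{ij} + λᵢ c_{ji})²/((1+λᵢ²)(1+λⱼ²)) ≥ 0. -/
/-!
Write `Dᵢ = 1 + λᵢ²`. The first and the last sum together equal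
`∑ᵢⱼ (½(cᵢⱼ² + cⱼᵢ²) - λᵢλⱼcᵢⱼcⱼᵢ) / (DᵢDⱼ)`, because the two integrands differ by a term
antisymmetric in `(i, j)`. Off the diagonal these terms are nonnegative, as
`λᵢλⱼ ≤ 1/(p-1) ≤ 1`. With `tᵢ = cᵢᵢ/Dᵢ`, the diagonal terms and the middle square give
`∑ (1 - λᵢ²)tᵢ² + (∑ λᵢtᵢ)² = ∑ tᵢ² + ∑_{i≠j} λᵢλⱼtᵢtⱼ`; only indices in the support `S` of `λ`
contribute to the cross terms, which are therefore at least
`-((∑_S |tᵢ|)² - ∑_S tᵢ²)/(p-1) ≥ -∑_S tᵢ²` by Cauchy–Schwarz, since `#S ≤ p`.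
-/

open Finset

variable {ι : Type*}

noncomputable def symmetrizedIntegrand (lam : ι → ℝ) (c : ι → ι → ℝ) (i j : ι) : ℝ :=
  ((c i j ^ 2 + c j i ^ 2) / 2 - lam i * lam j * (c i j * c j i)) /
    ((1 + lam i ^ 2) * (1 + lam j ^ 2))

theorem symmetrizedIntegrand_self (lam : ι → ℝ) (c : ι → ι → ℝ) (i : ι) :
    symmetrizedIntegrand lam c i i = (1 - lam i ^ 2) * (c i i / (1 + lam i ^ 2)) ^ 2 := by
  have : 1 + lam i ^ 2 ≠ 0 := by positivity
  unfold symmetrizedIntegrand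
  field_simp
  ring

theorem symmetrizedIntegrand_nonneg (lam : ι → ℝ) (c : ι → ι → ℝ) {i j : ι}
    (h0 : 0 ≤ lam i * lam j) (h1 : lam i * lam j ≤ 1) : 0 ≤ symmetrizedIntegrand lam c i j := by
  unfold symmetrizedIntegrand
  refine div_nonneg ?_ (by positivity)
  nlinarith [sq_nonneg (c i j - c j i), sq_nonneg (c i j + c j i)]

section Fintype

variable [Fintype ι]

theorem sum_sum_sub_swap_eq_zero (f : ι → ι → ℝ) : ∑ i, ∑ j, (f i j - f j i) = 0 := by
  simp only [sum_sub_distrib]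
  rw [sum_comm, sub_self]

theorem sum_sq_div_sub_half_sum_eq_sum_symmetrizedIntegrand (lam : ι → ℝ) (c : ι → ι → ℝ) :
    (∑ i, ∑ j, c i j ^ 2 / (1 + lam i ^ 2)) -
        (1 / 2) * ∑ i, ∑ j, (lam j * c i j + lam i * c j i) ^ 2 /
          ((1 + lam i ^ 2) * (1 + lam j ^ 2)) =
      ∑ i, ∑ j, symmetrizedIntegrand lam c i j := by
  have hpointwise : ∀ i j, c i j ^ 2 / (1 + lam i ^ 2) -
      1 / 2 * ((lam j * c i j + lam i * c j i) ^ 2 / ((1 + lam i ^ 2) * (1 + lam j ^ 2))) =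
        symmetrizedIntegrand lam c i j +
          (c i j ^ 2 / (2 * (1 + lam i ^ 2)) - c j i ^ 2 / (2 * (1 + lam j ^ 2))) := by
    intro i j
    have : 1 + lam i ^ 2 ≠ 0 := by positivity
    have : 1 + lam j ^ 2 ≠ 0 := by positivity
    unfold symmetrizedIntegrand
    field_simp
    ring
  simp only [mul_sum, ← sum_sub_distrib, hpointwise, sum_add_distrib,
    sum_sum_sub_swap_eq_zero (fun i j => c i j ^ 2 / (2 * (1 + lam i ^ 2))), add_zero]

variable [DecidableEq ι]

theorem sum_le_sum_sum_of_diag_le {f : ι → ι → ℝ} {g : ι → ℝ}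
    (h : ∀ i j, (if i = j then g i else 0) ≤ f i j) : ∑ i, g i ≤ ∑ i, ∑ j, f i j :=
  calc ∑ i, g i = ∑ i, ∑ j, (if i = j then g i else 0) := by simp
    _ ≤ ∑ i, ∑ j, f i j := by gcongr with i _ j _; exact h i j

theorem sum_sq_sub_mul_le_sq_sum {a b : ι → ℝ} {μ : ℝ}
    (h : ∀ i j, i ≠ j → -(μ * (b i * b j)) ≤ a i * a j) :
    ∑ i, a i ^ 2 - μ * ((∑ i, b i) ^ 2 - ∑ i, b i ^ 2) ≤ (∑ i, a i) ^ 2 := by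
  have hdiag : ∑ i, (a i ^ 2 + μ * b i ^ 2) ≤ ∑ i, ∑ j, (a i * a j + μ * (b i * b j)) := by
    refine sum_le_sum_sum_of_diag_le fun i j => ?_
    split_ifs with hij
    · subst hij; exact le_of_eq (by ring)
    · linarith [h i j hij]
  have hexpand : ∑ i, ∑ j, (a i * a j + μ * (b i * b j)) =
      (∑ i, a i) ^ 2 + μ * (∑ i, b i) ^ 2 := by
    rw [sq, sq, sum_mul_sum, sum_mul_sum, mul_sum]
    simp only [mul_sum, sum_add_distrib]
  rw [hexpand, sum_add_distrib, ← mul_sum] at hdiag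
  linarith

theorem sum_one_sub_sq_mul_sq_add_sq_sum_mul_nonneg {lam : ι → ℝ} {μ : ℝ}
    (hlam : ∀ i, 0 ≤ lam i) (hμ : 0 ≤ μ) (hprod : ∀ i j, i ≠ j → lam i * lam j ≤ μ)
    (hcard : ((univ.filter fun i => lam i ≠ 0).card - 1 : ℝ) * μ ≤ 1) (t : ι → ℝ) :
    0 ≤ ∑ i, (1 - lam i ^ 2) * t i ^ 2 + (∑ i, lam i * t i) ^ 2 := by
  set S := univ.filter fun i => lam i ≠ 0
  set u : ι → ℝ := fun i => if lam i ≠ 0 then |t i| else 0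
  have hpair : ∀ i j, i ≠ j → -(μ * (u i * u j)) ≤ lam i * t i * (lam j * t j) := by
    intro i j hij
    by_cases hi : lam i = 0
    · simp [u, hi]
    by_cases hj : lam j = 0
    · simp [u, hj]
    have hμt : lam i * lam j * |t i * t j| ≤ μ * |t i * t j| :=
      mul_le_mul_of_nonneg_right (hprod i j hij) (abs_nonneg _)
    simp only [u, hi, hj, ne_eq, not_false_eq_true, if_true, ← abs_mul]
    nlinarith [neg_abs_le (t i * t j), mul_nonneg (hlam i) (hlam j)]
  have hsum_u : ∑ i, u i = ∑ i ∈ S, |t i| := (sum_filter _ _).symm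
  have hsum_u_sq : ∑ i, u i ^ 2 = ∑ i ∈ S, t i ^ 2 := by
    rw [sum_filter]
    refine sum_congr rfl fun i _ => ?_
    split_ifs <;> simp [u, *]
  have hcauchy : (∑ i, u i) ^ 2 ≤ S.card * ∑ i, u i ^ 2 := by
    simpa only [hsum_u, hsum_u_sq, sq_abs] using
      sq_sum_le_card_mul_sum_sq (s := S) (f := fun i => |t i|)
  have hu_le_t : ∑ i, u i ^ 2 ≤ ∑ i, t i ^ 2 :=
    hsum_u_sq ▸ sum_le_sum_of_subset_of_nonneg (subset_univ S) fun i _ _ => sq_nonneg (t i)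
  have hu_nonneg : 0 ≤ ∑ i, u i ^ 2 := by positivity
  have hcross : μ * ((∑ i, u i) ^ 2 - ∑ i, u i ^ 2) ≤ ∑ i, u i ^ 2 := by
    nlinarith [mul_le_mul_of_nonneg_left hcauchy hμ, mul_le_mul_of_nonneg_right hcard hu_nonneg]
  have hsplit : ∑ i, (1 - lam i ^ 2) * t i ^ 2 = ∑ i, t i ^ 2 - ∑ i, (lam i * t i) ^ 2 := by
    rw [← sum_sub_distrib]
    exact sum_congr rfl fun i _ => by ring
  linarith [sum_sq_sub_mul_le_sq_sum hpair]

end Fintype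

theorem second_variation_two_jacobian_bound (n p : ℕ) (hp : 1 < p)
    (lam : Fin n → ℝ) (hlam0 : ∀ i, 0 ≤ lam i)
    (hrank : (Finset.univ.filter fun i => lam i ≠ 0).card ≤ p)
    (hprod : ∀ i j, i ≠ j → lam i * lam j ≤ 1 / (p - 1 : ℝ))
    (c : Fin n → Fin n → ℝ) :
    0 ≤ (∑ i, ∑ j, c i j ^ 2 / (1 + lam i ^ 2)) +
        (∑ i, lam i * c i i / (1 + lam i ^ 2)) ^ 2 -
        (1 / 2) * ∑ i, ∑ j, (lam j * c i j + lam i * c j i) ^ 2 /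
          ((1 + lam i ^ 2) * (1 + lam j ^ 2)) := by
  have hp1 : (1 : ℝ) ≤ p - 1 := by
    have : (2 : ℝ) ≤ p := by exact_mod_cast hp
    linarith
  have hμ_le_one : 1 / (p - 1 : ℝ) ≤ 1 := (div_le_one (by linarith)).2 hp1
  have hcard : ((univ.filter fun i => lam i ≠ 0).card - 1 : ℝ) * (1 / (p - 1 : ℝ)) ≤ 1 := by
    have : ((univ.filter fun i => lam i ≠ 0).card : ℝ) ≤ p := by exact_mod_cast hrank
    rw [mul_one_div, div_le_one (by linarith)]
    linarith
  have hdiag := sum_one_sub_sq_mul_sq_add_sq_sum_mul_nonneg hlam0 (by positivity) hprod hcard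
    fun i => c i i / (1 + lam i ^ 2)
  have hoffdiag : ∑ i, (1 - lam i ^ 2) * (c i i / (1 + lam i ^ 2)) ^ 2 ≤
      ∑ i, ∑ j, symmetrizedIntegrand lam c i j := by
    refine sum_le_sum_sum_of_diag_le fun i j => ?_
    split_ifs with hij
    · rw [hij, symmetrizedIntegrand_self]
    · exact symmetrizedIntegrand_nonneg lam c (mul_nonneg (hlam0 i) (hlam0 j))
        ((hprod i j hij).trans hμ_le_one)
  simp only [mul_div_assoc] at hdiag ⊢
  linarith [sum_sq_div_sub_half_sum_eq_sum_symmetrizedIntegrand lam c]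
end
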